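/- For a finite group G acting on itself by conjugation and a 3-cocycle w ∈ Z³(G,𝕋), the Dijkgraaf–Pasquier–Roche triple (α_w, β_w, θ_w) defined by α_w[g|h‖x] = w[g|h|x]·w[ghxh⁻¹g⁻¹|g|h]/w[g|hxh⁻¹|h], β_w[g‖x|y] = w[g|x|y]·w[gxg⁻¹|gyg⁻¹|g]/w[gxg⁻¹|g|y], θ_w[x|y|z] = w[x|y|z], equals the image τ₁∨(w) of w under the restricted dual shuffle homomorphism; in particular α_w ⊕ β_w ⊕ θ_w is a 3-cocycle in Z³(Tot^*(A^{*,*}(G ⋊ G, 𝕋))). -/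
import Mathlib

set_option maxRecDepth 4000


namespace Stmt16

/-- The circle group `𝕋 = ℝ/ℤ`, written additively. -/
abbrev 𝕋 : Type := AddCircle (1 : ℝ)

variable (K : Type) [Group K]

/-- A `(p,q)`-shuffle: a permutation of `Fin (p+q)` monotone on the first `p` and the
last `q` letters. -/
def IsShuffle (p q : ℕ) (σ : Equiv.Perm (Fin (p + q))) : Prop :=
  ∀ i j : Fin (p + q), i < j → (((j : ℕ) < p) ∨ (p ≤ (i : ℕ))) → σ i < σ j

/-- Product `g_d ⋯ g_{p-1}` of a tail of a tuple. -/
def prefixProd {p : ℕ} (gs : Fin p → K) (d : ℕ) : K := ((List.ofFn gs).drop d).prod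

/-- The tuple `λ[g₁|…|g_p|k₁|…|k_q]` associated to a `(p,q)`-shuffle `λ`:
`s_{λ(i)} = gᵢ` for `i ≤ p` and
`s_{λ(i)} = (g_{p+λ(i)-i+1}⋯g_p)·k_{i-p}·(g_{p+λ(i)-i+1}⋯g_p)⁻¹` for `i > p`. -/
def shuffleTuple (p q : ℕ) (σ : Equiv.Perm (Fin (p + q))) (gs : Fin p → K)
    (ks : Fin q → K) : Fin (p + q) → K :=
  fun j =>
    if h : ((σ.symm j : Fin (p + q)) : ℕ) < p then gs ⟨(σ.symm j : Fin (p + q)), h⟩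
    else
      prefixProd K gs (p + (j : ℕ) - ((σ.symm j : Fin (p + q)) : ℕ)) *
        ks ⟨((σ.symm j : Fin (p + q)) : ℕ) - p, by
          have := (σ.symm j).isLt; omega⟩ *
        (prefixProd K gs (p + (j : ℕ) - ((σ.symm j : Fin (p + q)) : ℕ)))⁻¹

open scoped Classical in
/-- `τ[g₁|…|g_p‖k₁|…|k_q] = Σ_{λ ∈ Shuff(p,q)} (-1)^|λ| λ[g₁|…|g_p|k₁|…|k_q]`
as a formal `ℤ`-linear combination of `(p+q)`-tuples. -/
noncomputable def tauBar (p q : ℕ) (gs : Fin p → K) (ks : Fin q → K) :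
    ((Fin (p + q) → K) →₀ ℤ) :=
  ∑ σ ∈ Finset.univ.filter (fun σ => IsShuffle p q σ),
    (((Equiv.Perm.sign σ : ℤˣ) : ℤ)) • Finsupp.single (shuffleTuple K p q σ gs ks) 1

variable {K}

/-- The Dijkgraaf–Pasquier–Roche cochain
`α_w[g|h‖x] = w[g|h|x]·w[ghxh⁻¹g⁻¹|g|h]/w[g|hxh⁻¹|h]` (written additively). -/
noncomputable def alphaW (w : K → K → K → 𝕋) : K → K → K → 𝕋 := fun g h x =>
  w g h x + w (g * h * x * h⁻¹ * g⁻¹) g h - w g (h * x * h⁻¹) h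

/-- The Dijkgraaf–Pasquier–Roche cochain
`β_w[g‖x|y] = w[g|x|y]·w[gxg⁻¹|gyg⁻¹|g]/w[gxg⁻¹|g|y]` (written additively). -/
noncomputable def betaW (w : K → K → K → 𝕋) : K → K → K → 𝕋 := fun g x y =>
  w g x y + w (g * x * g⁻¹) (g * y * g⁻¹) g - w (g * x * g⁻¹) g y

/-- Evaluation of a cochain `w` on a formal `ℤ`-linear combination of triples. -/
noncomputable def evalW (w : K → K → K → 𝕋) {m : ℕ} (h : m = 3)
    (c : (Fin m → K) →₀ ℤ) : 𝕋 :=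
  c.sum fun t z => z • w (t (Fin.cast h.symm 0)) (t (Fin.cast h.symm 1)) (t (Fin.cast h.symm 2))

instance (p q : ℕ) : DecidablePred (IsShuffle p q) := fun σ => by
  unfold IsShuffle; infer_instance

private def s021 : Equiv.Perm (Fin 3) := ⟨![0,2,1], ![0,2,1], by decide, by decide⟩
private def s120 : Equiv.Perm (Fin 3) := ⟨![1,2,0], ![2,0,1], by decide, by decide⟩
private def s102 : Equiv.Perm (Fin 3) := ⟨![1,0,2], ![1,0,2], by decide, by decide⟩
private def s201 : Equiv.Perm (Fin 3) := ⟨![2,0,1], ![1,2,0], by decide, by decide⟩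

private lemma evalW_add (w : K → K → K → 𝕋) (a b : (Fin 3 → K) →₀ ℤ) :
    evalW w rfl (a + b) = evalW w rfl a + evalW w rfl b := by
  unfold evalW
  exact Finsupp.sum_add_index' (fun t => zero_smul ℤ _) (fun t z1 z2 => add_smul z1 z2 _)

private lemma evalW_single (w : K → K → K → 𝕋) (t : Fin 3 → K) (z : ℤ) :
    evalW w rfl (Finsupp.single t z) = z • w (t 0) (t 1) (t 2) := by
  unfold evalW
  rw [Finsupp.sum_single_index (by exact zero_smul ℤ _)]
  rfl

private lemma alpha_eq (w : K → K → K → 𝕋) (g h x : K) :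
    alphaW w g h x = evalW w rfl (tauBar K 2 1 ![g, h] ![x]) := by
  have hf : (Finset.univ.filter (fun σ => IsShuffle 2 1 σ)) = {1, s021, s120} := by
    rw [Finset.filter_congr_decidable]; decide
  rw [tauBar, Finset.filter_congr_decidable, hf]
  rw [Finset.sum_insert (by decide), Finset.sum_insert (by decide), Finset.sum_singleton]
  rw [show ((Equiv.Perm.sign (1 : Equiv.Perm (Fin 3)) : ℤˣ) : ℤ) = 1 by decide]
  rw [show ((Equiv.Perm.sign s021 : ℤˣ) : ℤ) = -1 by decide]
  rw [show ((Equiv.Perm.sign s120 : ℤˣ) : ℤ) = 1 by decide]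
  simp only [Finsupp.smul_single, smul_eq_mul, mul_one]
  rw [evalW_add, evalW_add, evalW_single, evalW_single, evalW_single]
  rw [show shuffleTuple K 2 1 1 ![g,h] ![x] 0 = g from rfl,
      show shuffleTuple K 2 1 1 ![g,h] ![x] 1 = h from rfl,
      show shuffleTuple K 2 1 1 ![g,h] ![x] 2 = 1*x*1⁻¹ from rfl,
      show shuffleTuple K 2 1 s021 ![g,h] ![x] 0 = g from rfl,
      show shuffleTuple K 2 1 s021 ![g,h] ![x] 1 = (h*1)*x*(h*1)⁻¹ from rfl,
      show shuffleTuple K 2 1 s021 ![g,h] ![x] 2 = h from rfl,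
      show shuffleTuple K 2 1 s120 ![g,h] ![x] 0 = (g*(h*1))*x*(g*(h*1))⁻¹ from rfl,
      show shuffleTuple K 2 1 s120 ![g,h] ![x] 1 = g from rfl,
      show shuffleTuple K 2 1 s120 ![g,h] ![x] 2 = h from rfl]
  simp only [one_smul, neg_smul, mul_one, one_mul, inv_one, mul_inv_rev, alphaW, mul_assoc]
  abel

private lemma beta_eq (w : K → K → K → 𝕋) (g x y : K) :
    betaW w g x y = evalW w rfl (tauBar K 1 2 ![g] ![x, y]) := by
  have hf : (Finset.univ.filter (fun σ => IsShuffle 1 2 σ)) = {1, s102, s201} := by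
    rw [Finset.filter_congr_decidable]; decide
  rw [tauBar, Finset.filter_congr_decidable, hf]
  rw [Finset.sum_insert (by decide), Finset.sum_insert (by decide), Finset.sum_singleton]
  rw [show ((Equiv.Perm.sign (1 : Equiv.Perm (Fin 3)) : ℤˣ) : ℤ) = 1 by decide]
  rw [show ((Equiv.Perm.sign s102 : ℤˣ) : ℤ) = -1 by decide]
  rw [show ((Equiv.Perm.sign s201 : ℤˣ) : ℤ) = 1 by decide]
  simp only [Finsupp.smul_single, smul_eq_mul, mul_one]
  rw [evalW_add, evalW_add, evalW_single, evalW_single, evalW_single]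
  rw [show shuffleTuple K 1 2 1 ![g] ![x,y] 0 = g from rfl,
      show shuffleTuple K 1 2 1 ![g] ![x,y] 1 = 1*x*1⁻¹ from rfl,
      show shuffleTuple K 1 2 1 ![g] ![x,y] 2 = 1*y*1⁻¹ from rfl,
      show shuffleTuple K 1 2 s102 ![g] ![x,y] 0 = (g*1)*x*(g*1)⁻¹ from rfl,
      show shuffleTuple K 1 2 s102 ![g] ![x,y] 1 = g from rfl,
      show shuffleTuple K 1 2 s102 ![g] ![x,y] 2 = 1*y*1⁻¹ from rfl,
      show shuffleTuple K 1 2 s201 ![g] ![x,y] 0 = (g*1)*x*(g*1)⁻¹ from rfl,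
      show shuffleTuple K 1 2 s201 ![g] ![x,y] 1 = (g*1)*y*(g*1)⁻¹ from rfl,
      show shuffleTuple K 1 2 s201 ![g] ![x,y] 2 = g from rfl]
  simp only [one_smul, neg_smul, mul_one, one_mul, inv_one, mul_inv_rev, betaW, mul_assoc]
  abel

private lemma theta_eq (w : K → K → K → 𝕋) (x y z : K) :
    w x y z = evalW w rfl (tauBar K 0 3 ![] ![x, y, z]) := by
  have hf : (Finset.univ.filter (fun σ => IsShuffle 0 3 σ)) = {1} := by
    rw [Finset.filter_congr_decidable]; decide
  rw [tauBar, Finset.filter_congr_decidable, hf, Finset.sum_singleton]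
  rw [show ((Equiv.Perm.sign (1 : Equiv.Perm (Fin 3)) : ℤˣ) : ℤ) = 1 by decide]
  simp only [Finsupp.smul_single, smul_eq_mul, mul_one]
  rw [evalW_single]
  rw [show shuffleTuple K 0 3 1 ![] ![x,y,z] 0 = 1*x*1⁻¹ from rfl,
      show shuffleTuple K 0 3 1 ![] ![x,y,z] 1 = 1*y*1⁻¹ from rfl,
      show shuffleTuple K 0 3 1 ![] ![x,y,z] 2 = 1*z*1⁻¹ from rfl]
  simp

/-- For a finite group `G` acting on itself by conjugation and a
normalized 3-cocycle `w ∈ Z³(G,𝕋)`, the Dijkgraaf–Pasquier–Roche triple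
`(α_w, β_w, θ_w)` equals the image `τ₁∨(w)` of `w` under the restricted dual shuffle
homomorphism; in particular `α_w ⊕ β_w ⊕ θ_w` is a normalized 3-cocycle in
`Z³(Tot^*(A^{*,*}(G ⋊ G, 𝕋)))`. -/
theorem stmt_16 [Finite K] (w : K → K → K → 𝕋)
    (hnorm : ∀ a b c, (a = 1 ∨ b = 1 ∨ c = 1) → w a b c = 0)
    (hcoc : ∀ a b c d,
      w b c d - w (a * b) c d + w a (b * c) d - w a b (c * d) + w a b c = 0) :
    -- the DPR triple is the image of `w` under the restricted dual shuffle homomorphism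
    ((∀ g h x, alphaW w g h x = evalW w rfl (tauBar K 2 1 ![g, h] ![x])) ∧
     (∀ g x y, betaW w g x y = evalW w rfl (tauBar K 1 2 ![g] ![x, y])) ∧
     (∀ x y z, w x y z = evalW w rfl (tauBar K 0 3 ![] ![x, y, z]))) ∧
    -- it is a normalized 3-cocycle in `Z³(Tot(A^{*,*}(G ⋊ G, 𝕋)))`
    ((∀ g h x, (g = 1 ∨ h = 1 ∨ x = 1) → alphaW w g h x = 0) ∧
     (∀ g x y, (g = 1 ∨ x = 1 ∨ y = 1) → betaW w g x y = 0) ∧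
     -- `δ_G α_w = 0`
     (∀ g₁ g₂ g₃ k,
        alphaW w g₂ g₃ k - alphaW w (g₁ * g₂) g₃ k + alphaW w g₁ (g₂ * g₃) k -
          alphaW w g₁ g₂ (g₃ * k * g₃⁻¹) = 0) ∧
     -- `δ_K α_w + δ_G β_w = 0`
     (∀ g₁ g₂ x y,
        (alphaW w g₁ g₂ y - alphaW w g₁ g₂ (x * y) + alphaW w g₁ g₂ x) +
          (betaW w g₂ x y - betaW w (g₁ * g₂) x y +
            betaW w g₁ (g₂ * x * g₂⁻¹) (g₂ * y * g₂⁻¹)) = 0) ∧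
     -- `δ_K β_w = δ_G θ_w`
     (∀ g x y z,
        betaW w g y z - betaW w g (x * y) z + betaW w g x (y * z) - betaW w g x y =
          w x y z - w (g * x * g⁻¹) (g * y * g⁻¹) (g * z * g⁻¹)) ∧
     -- `δ_K θ_w = 0`
     (∀ x y z u,
        w y z u - w (x * y) z u + w x (y * z) u - w x y (z * u) + w x y z = 0)) := by
  refine ⟨⟨alpha_eq w, beta_eq w, theta_eq w⟩, ?_, ?_, ?_, ?_, ?_, hcoc⟩
  · rintro g h x (rfl | rfl | rfl)
    · simp only [alphaW, one_mul, mul_one, inv_one]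
      rw [hnorm _ _ _ (Or.inl rfl), hnorm _ _ _ (Or.inr (Or.inl rfl)),
        hnorm _ _ _ (Or.inl rfl)]
      abel
    · simp only [alphaW, one_mul, mul_one, inv_one]
      rw [hnorm _ _ _ (Or.inr (Or.inl rfl)), hnorm _ _ _ (Or.inr (Or.inr rfl)),
        hnorm _ _ _ (Or.inr (Or.inr rfl))]
      abel
    · simp only [alphaW, one_mul, mul_one, inv_one, mul_inv_cancel_right,
        mul_inv_cancel]
      rw [hnorm _ _ _ (Or.inr (Or.inr rfl)), hnorm _ _ _ (Or.inl rfl),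
        hnorm _ _ _ (Or.inr (Or.inl rfl))]
      abel
  · rintro g x y (rfl | rfl | rfl)
    · simp only [betaW, one_mul, mul_one, inv_one]
      rw [hnorm _ _ _ (Or.inl rfl), hnorm _ _ _ (Or.inr (Or.inr rfl)),
        hnorm _ _ _ (Or.inr (Or.inl rfl))]
      abel
    · simp only [betaW, one_mul, mul_one, inv_one, mul_inv_cancel]
      rw [hnorm _ _ _ (Or.inr (Or.inl rfl)), hnorm _ _ _ (Or.inl rfl),
        hnorm _ _ _ (Or.inl rfl)]
      abel
    · simp only [betaW, one_mul, mul_one, inv_one, mul_inv_cancel]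
      rw [hnorm _ _ _ (Or.inr (Or.inr rfl)), hnorm _ _ _ (Or.inr (Or.inl rfl)),
        hnorm _ _ _ (Or.inr (Or.inr rfl))]
      abel
  · intro g₁ g₂ g₃ k
    have h1 := hcoc g₁ g₂ g₃ k
    have h2 := hcoc g₁ g₂ (g₃*k*g₃⁻¹) g₃
    have h3 := hcoc g₁ (g₂*g₃*k*g₃⁻¹*g₂⁻¹) g₂ g₃
    have h4 := hcoc (g₁*g₂*g₃*k*g₃⁻¹*g₂⁻¹*g₁⁻¹) g₁ g₂ g₃
    simp only [alphaW, mul_assoc, mul_inv_rev, inv_inv, inv_mul_cancel_left,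
      mul_inv_cancel_left, inv_mul_cancel, mul_inv_cancel, one_mul, mul_one] at h1 h2 h3 h4 ⊢
    linear_combination (norm := abel1) h1 - h2 + h3 - h4
  · intro g₁ g₂ x y
    have h1 := hcoc g₁ g₂ x y
    have h2 := hcoc g₁ (g₂*x*g₂⁻¹) g₂ y
    have h3 := hcoc (g₁*g₂*x*g₂⁻¹*g₁⁻¹) g₁ g₂ y
    have h4 := hcoc g₁ (g₂*x*g₂⁻¹) (g₂*y*g₂⁻¹) g₂
    have h5 := hcoc (g₁*g₂*x*g₂⁻¹*g₁⁻¹) g₁ (g₂*y*g₂⁻¹) g₂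
    have h6 := hcoc (g₁*g₂*x*g₂⁻¹*g₁⁻¹) (g₁*g₂*y*g₂⁻¹*g₁⁻¹) g₁ g₂
    simp only [alphaW, betaW, mul_assoc, mul_inv_rev, inv_inv, inv_mul_cancel_left,
      mul_inv_cancel_left, inv_mul_cancel, mul_inv_cancel, one_mul, mul_one] at h1 h2 h3 h4 h5 h6 ⊢
    linear_combination (norm := abel1) h1 - h2 + h3 + h4 - h5 + h6
  · intro g x y z
    have h1 := hcoc g x y z
    have h2 := hcoc (g*x*g⁻¹) g y z
    have h3 := hcoc (g*x*g⁻¹) (g*y*g⁻¹) g z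
    have h4 := hcoc (g*x*g⁻¹) (g*y*g⁻¹) (g*z*g⁻¹) g
    simp only [betaW, mul_assoc, mul_inv_rev, inv_inv, inv_mul_cancel_left,
      mul_inv_cancel_left, inv_mul_cancel, mul_inv_cancel, one_mul, mul_one] at h1 h2 h3 h4 ⊢
    linear_combination (norm := abel1) -h1 + h2 - h3 + h4


end Stmt16
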